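/- Under the greedy neighbor-awakening scheme along a path in a t-spanner of maximum degree k, the total awakening distance from the root s₀ to any vertex s satisfies awakedist(s₀, s) ≤ (2k−1)·d_H(s₀, s) ≤ t·(2k−1)·d_G(s₀, s), where d_H is the spanner distance and d_G the original graph distance. -/

import Mathlib

theorem greedy_awakening_bound_general {V : Type*}
    (dG dH awaken awakedist : V → V → ℝ) (t : ℝ) (k : ℕ)
    (s₀ s : V) (r : ℕ) (p : ℕ → V)
    (hk : 1 ≤ k)
    (hspanner : dH s₀ s ≤ t * dG s₀ s)
    (hpath : dH s₀ s = ∑ i ∈ Finset.range r, dH (p i) (p (i + 1)))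
    (hstep : ∀ i < r, awaken (p i) (p (i + 1)) ≤ (2 * (k : ℝ) - 1) * dH (p i) (p (i + 1)))
    (hawake : awakedist s₀ s = ∑ i ∈ Finset.range r, awaken (p i) (p (i + 1))) :
    awakedist s₀ s ≤ (2 * (k : ℝ) - 1) * dH s₀ s ∧
    (2 * (k : ℝ) - 1) * dH s₀ s ≤ t * (2 * (k : ℝ) - 1) * dG s₀ s := by
  have hcoef : 0 ≤ 2 * (k : ℝ) - 1 := by
    have : (1 : ℝ) ≤ k := by exact_mod_cast hk
    linarith
  refine ⟨?_, ?_⟩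
  · rw [hawake, hpath, Finset.mul_sum]
    exact Finset.sum_le_sum fun i hi => hstep i (Finset.mem_range.mp hi)
  · calc (2 * (k : ℝ) - 1) * dH s₀ s ≤ (2 * (k : ℝ) - 1) * (t * dG s₀ s) :=
          mul_le_mul_of_nonneg_left hspanner hcoef
      _ = t * (2 * (k : ℝ) - 1) * dG s₀ s := by ring

/-- Along a shortest path `p 0, …, p r` from `s₀` to `s` in a `t`-spanner `H` of
maximum degree `k`, where each awakening step costs at most `(2k-1)` times the
corresponding spanner distance, the total awakening distance satisfies
`awakedist s₀ s ≤ (2k-1) * dH s₀ s ≤ t * (2k-1) * dG s₀ s`. -/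
theorem greedy_awakening_bound {V : Type*}
    (dG dH awaken awakedist : V → V → ℝ) (t : ℝ) (k : ℕ)
    (s₀ s : V) (r : ℕ) (p : ℕ → V)
    (hp0 : p 0 = s₀) (hpr : p r = s)
    (hdHnonneg : ∀ a b, 0 ≤ dH a b)
    (hdGnonneg : 0 ≤ dG s₀ s)
    (ht : 0 ≤ t) (hk : 1 ≤ k)
    (hspanner : dH s₀ s ≤ t * dG s₀ s)
    (hpath : dH s₀ s = ∑ i ∈ Finset.range r, dH (p i) (p (i + 1)))
    (hstep : ∀ i < r, awaken (p i) (p (i + 1)) ≤ (2 * (k : ℝ) - 1) * dH (p i) (p (i + 1)))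
    (hawake : awakedist s₀ s = ∑ i ∈ Finset.range r, awaken (p i) (p (i + 1))) :
    awakedist s₀ s ≤ (2 * (k : ℝ) - 1) * dH s₀ s ∧
    (2 * (k : ℝ) - 1) * dH s₀ s ≤ t * (2 * (k : ℝ) - 1) * dG s₀ s :=
  greedy_awakening_bound_general dG dH awaken awakedist t k s₀ s r p hk hspanner hpath hstep hawake
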